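/- arXiv:2205.13198 — 5 statements merged into one kernel-verified Lean document; each statement's English description precedes it below -/
import Mathlib

section
/- For fixed S₂ > S₁ > 0 and positive integer N_B, the function S₁ ↦ Γ(N_B, ρ₁₂/S₁)/Γ(N_B) with ρ₁₂ = N_B·(S₁S₂/(S₂-S₁))·ln(S₂/S₁) is increasing in S₁; consequently, with S₁ = ε₁ + N_o and ε₁ ≥ 0, the error probability P_{e,S₁} is minimized at ε₁ = 0. -/
/-- Upper incomplete gamma function. -/
noncomputable def upperIncGamma (s x : ℝ) : ℝ :=
  ∫ t in Set.Ioi x, t ^ (s - 1) * Real.exp (-t)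

lemma upperIncGamma_anti (s : ℝ) (hs : 0 < s) {x y : ℝ} (hx : 0 ≤ x) (hxy : x ≤ y) :
    upperIncGamma s y ≤ upperIncGamma s x := by
  have hint : MeasureTheory.IntegrableOn (fun t : ℝ => t ^ (s - 1) * Real.exp (-t))
      (Set.Ioi x) MeasureTheory.volume := by
    have := Real.GammaIntegral_convergent hs
    have h2 : MeasureTheory.IntegrableOn (fun t : ℝ => t ^ (s - 1) * Real.exp (-t))
        (Set.Ioi 0) MeasureTheory.volume := by
      simpa [mul_comm] using this
    exact h2.mono_set (Set.Ioi_subset_Ioi hx)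
  unfold upperIncGamma
  apply MeasureTheory.setIntegral_mono_set hint
  · filter_upwards [MeasureTheory.ae_restrict_mem measurableSet_Ioi] with t ht
    have ht0 : 0 < t := lt_of_le_of_lt hx ht
    positivity
  · exact Filter.Eventually.of_forall fun t ht => lt_of_le_of_lt hxy ht

lemma ratio_anti {S₂ : ℝ} (hS₂ : 0 < S₂) :
    AntitoneOn (fun t => (Real.log S₂ - Real.log t) / (S₂ - t)) (Set.Ioo 0 S₂) := by
  apply antitoneOn_of_deriv_nonpos (convex_Ioo 0 S₂)
  · apply ContinuousOn.div
    · exact continuousOn_const.sub (Real.continuousOn_log.mono (by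
        intro t ht; exact ne_of_gt ht.1))
    · exact (continuousOn_const.sub continuousOn_id)
    · intro t ht; exact sub_ne_zero.mpr (ne_of_gt ht.2)
  all_goals
    rw [interior_Ioo]
    intro t ht
    have ht0 : 0 < t := ht.1
    have hts : t < S₂ := ht.2
    have hden : S₂ - t ≠ 0 := sub_ne_zero.mpr (ne_of_gt hts)
    have hd : HasDerivAt (fun t => (Real.log S₂ - Real.log t) / (S₂ - t))
        (((0 - t⁻¹) * (S₂ - t) - (Real.log S₂ - Real.log t) * (0 - 1)) / (S₂ - t) ^ 2) t := by
      exact HasDerivAt.div ((hasDerivAt_const t (Real.log S₂)).sub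
        (Real.hasDerivAt_log (ne_of_gt ht0)))
        ((hasDerivAt_const t S₂).sub (hasDerivAt_id t)) hden
  · exact hd.differentiableAt.differentiableWithinAt
  · rw [hd.deriv]
    apply div_nonpos_of_nonpos_of_nonneg _ (sq_nonneg _)
    have hlog : Real.log S₂ - Real.log t ≤ (S₂ - t) / t := by
      rw [← Real.log_div (ne_of_gt hS₂) (ne_of_gt ht0)]
      have := Real.log_le_sub_one_of_pos (div_pos hS₂ ht0)
      calc Real.log (S₂ / t) ≤ S₂ / t - 1 := this
        _ = (S₂ - t) / t := by field_simp
    have hfin : (0 - t⁻¹) * (S₂ - t) - (Real.log S₂ - Real.log t) * (0 - 1)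
        = (Real.log S₂ - Real.log t) - (S₂ - t) / t := by
      field_simp
      ring
    rw [hfin]; linarith

/-- For fixed `S₂ > 0` and `N_B ≥ 1`, the map
`S₁ ↦ Γ(N_B, ρ₁₂/S₁)/Γ(N_B)` with `ρ₁₂ = N_B (S₁S₂/(S₂-S₁)) ln(S₂/S₁)` is
increasing on `(0, S₂)`; hence with `S₁ = ε₁ + N_o`, `ε₁ ≥ 0`, the error
probability is minimized at `ε₁ = 0`. -/
theorem Pe_S1_monotone_min_at_eps_zero (N_B : ℕ) (hNB : 0 < N_B) (S₂ No : ℝ)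
    (hNo : 0 < No) (hNoS₂ : No < S₂)
    (f : ℝ → ℝ)
    (hf : ∀ S₁, f S₁ =
      upperIncGamma (N_B : ℝ)
        (((N_B : ℝ) * (S₁ * S₂ / (S₂ - S₁)) * Real.log (S₂ / S₁)) / S₁) /
        Real.Gamma (N_B : ℝ)) :
    MonotoneOn f (Set.Ioo 0 S₂) ∧
    (∀ ε₁ : ℝ, 0 ≤ ε₁ → ε₁ + No < S₂ → f No ≤ f (ε₁ + No)) := by
  have hS₂ : 0 < S₂ := lt_trans hNo hNoS₂
  have hNBpos : (0 : ℝ) < (N_B : ℝ) := by exact_mod_cast hNB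
  -- rewrite the threshold
  have hx : ∀ S₁ ∈ Set.Ioo (0:ℝ) S₂,
      ((N_B : ℝ) * (S₁ * S₂ / (S₂ - S₁)) * Real.log (S₂ / S₁)) / S₁
        = (N_B : ℝ) * S₂ * ((Real.log S₂ - Real.log S₁) / (S₂ - S₁)) := by
    intro S₁ hS₁
    have h1 : S₁ ≠ 0 := ne_of_gt hS₁.1
    have h2 : S₂ - S₁ ≠ 0 := sub_ne_zero.mpr (ne_of_gt hS₁.2)
    rw [Real.log_div (ne_of_gt hS₂) h1]
    field_simp
  have hxpos : ∀ S₁ ∈ Set.Ioo (0:ℝ) S₂,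
      0 ≤ (N_B : ℝ) * S₂ * ((Real.log S₂ - Real.log S₁) / (S₂ - S₁)) := by
    intro S₁ hS₁
    have hlog : 0 ≤ Real.log S₂ - Real.log S₁ :=
      sub_nonneg.mpr (Real.log_le_log (hS₁.1) (le_of_lt hS₁.2))
    have : 0 ≤ (Real.log S₂ - Real.log S₁) / (S₂ - S₁) :=
      div_nonneg hlog (le_of_lt (sub_pos.mpr hS₁.2))
    positivity
  have hmono : MonotoneOn f (Set.Ioo 0 S₂) := by
    intro a ha b hb hab
    rw [hf a, hf b, hx a ha, hx b hb]
    apply div_le_div_of_nonneg_right _ (Real.Gamma_pos_of_pos hNBpos).le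
    apply upperIncGamma_anti _ hNBpos (hxpos b hb)
    have hr := ratio_anti hS₂ ha hb hab
    have : (N_B : ℝ) * S₂ ≥ 0 := by positivity
    exact mul_le_mul_of_nonneg_left hr this
  refine ⟨hmono, fun ε₁ hε₁ hεS₂ => ?_⟩
  have h1 : No ∈ Set.Ioo (0:ℝ) S₂ := ⟨hNo, hNoS₂⟩
  have h2 : ε₁ + No ∈ Set.Ioo (0:ℝ) S₂ := ⟨by linarith, hεS₂⟩
  exact hmono h1 h2 (by linarith)
end

section
/- Let N_B be a positive integer and S₁, S₂ > 0 with S₁ < S₂, and set κ₁ = (S₁ - S₂)/S₂ ∈ (-1, 0). Then Γ(N_B, ρ₁₂/S₁)/Γ(N_B) ≤ Γ(N_B, 2N_B/(2+κ₁))/Γ(N_B), where ρ₁₂ = N_B·(S₁S₂/(S₂-S₁))·ln(S₂/S₁). In particular, if S₁ ≤ S₂ (so that 2/(2+κ₁) ≥ 1), this probability is at most Γ(N_B, N_B)/Γ(N_B), and as S₁ → 0 it is bounded by Γ(N_B, 2N_B)/Γ(N_B). -/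
open Set MeasureTheory

lemma uig_integrableOn {s a : ℝ} (hs : 0 < s) (ha : 0 ≤ a) :
    IntegrableOn (fun t : ℝ => t ^ (s - 1) * Real.exp (-t)) (Set.Ioi a) := by
  have h := (Real.GammaIntegral_convergent hs).mono_set (Set.Ioi_subset_Ioi ha)
  simpa [mul_comm] using h

lemma uig_anti {s : ℝ} (hs : 0 < s) {a b : ℝ} (ha : 0 ≤ a) (hab : a ≤ b) :
    upperIncGamma s b ≤ upperIncGamma s a := by
  unfold upperIncGamma
  refine setIntegral_mono_set (uig_integrableOn hs ha) ?_
    (HasSubset.Subset.eventuallyLE (Set.Ioi_subset_Ioi hab))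
  filter_upwards [ae_restrict_mem measurableSet_Ioi] with t ht
  exact mul_nonneg (Real.rpow_nonneg (le_of_lt (lt_of_le_of_lt ha ht)) _)
    (Real.exp_pos _).le

lemma aux_exp {a : ℝ} (ha : 0 ≤ a) :
    (1 - a) * Real.exp a ≤ (1 + a) * Real.exp (-a) := by
  set f : ℝ → ℝ := fun x => (1 + x) * Real.exp (-x) - (1 - x) * Real.exp x with hf
  have hd : ∀ x : ℝ, HasDerivAt f (x * (Real.exp x - Real.exp (-x))) x := by
    intro x
    have h1 : HasDerivAt (fun y : ℝ => (1 + y) * Real.exp (-y))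
        (1 * Real.exp (-x) + (1 + x) * (Real.exp (-x) * (-1))) x :=
      ((hasDerivAt_id x).const_add 1).mul ((hasDerivAt_id x).neg.exp)
    have h2 : HasDerivAt (fun y : ℝ => (1 - y) * Real.exp y)
        ((-1) * Real.exp x + (1 - x) * Real.exp x) x :=
      ((hasDerivAt_id x).const_sub 1).mul (Real.hasDerivAt_exp x)
    have := h1.sub h2
    refine this.congr_deriv ?_
    ring
  have hmono : MonotoneOn f (Set.Ici (0:ℝ)) := by
    refine monotoneOn_of_deriv_nonneg (convex_Ici 0)
      (fun x _ => ((hd x).differentiableAt).continuousAt.continuousWithinAt)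
      (fun x _ => ((hd x).differentiableAt).differentiableWithinAt)
      (fun x hx => ?_)
    rw [interior_Ici] at hx
    rw [(hd x).deriv]
    have : Real.exp (-x) ≤ Real.exp x := Real.exp_le_exp.mpr (by linarith [(Set.mem_Ioi.mp hx).le])
    exact mul_nonneg (le_of_lt hx) (by linarith)
  have h0 : f 0 = 0 := by simp [hf]
  have := hmono (Set.self_mem_Ici) (Set.mem_Ici.mpr ha) ha
  rw [h0] at this
  have : 0 ≤ (1 + a) * Real.exp (-a) - (1 - a) * Real.exp a := this
  linarith

lemma log_le_pade {y : ℝ} (h0 : 0 < y) (h1 : y < 1) :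
    Real.log y ≤ 2 * (y - 1) / (y + 1) := by
  have hy1 : (0:ℝ) < 1 + y := by linarith
  set a : ℝ := (1 - y) / (1 + y) with ha
  have ha0 : 0 ≤ a := div_nonneg (by linarith) hy1.le
  have key := aux_exp ha0
  have h1a : 1 - a = 2 * y / (1 + y) := by
    rw [ha, eq_div_iff hy1.ne', sub_mul, div_mul_cancel₀ _ hy1.ne']; ring
  have h2a : 1 + a = 2 / (1 + y) := by
    rw [ha, eq_div_iff hy1.ne', add_mul, div_mul_cancel₀ _ hy1.ne']; ring
  rw [h1a, h2a] at key
  have hy_le : y * Real.exp a ≤ Real.exp (-a) := by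
    have h2 : (0:ℝ) < 2 / (1 + y) := by positivity
    calc y * Real.exp a = (1 + y) / 2 * (2 * y / (1 + y) * Real.exp a) := by
          field_simp
      _ ≤ (1 + y) / 2 * (2 / (1 + y) * Real.exp (-a)) := by
          have : (0:ℝ) ≤ (1 + y) / 2 := by positivity
          exact mul_le_mul_of_nonneg_left key this
      _ = Real.exp (-a) := by field_simp
  have hy2 : y ≤ Real.exp (-2 * a) := by
    have h := mul_le_mul_of_nonneg_right hy_le (Real.exp_pos (-a)).le
    calc y = y * Real.exp a * Real.exp (-a) := by
          rw [mul_assoc, ← Real.exp_add]; simp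
      _ ≤ Real.exp (-a) * Real.exp (-a) := h
      _ = Real.exp (-2 * a) := by rw [← Real.exp_add]; ring_nf
  have := (Real.log_le_iff_le_exp h0).mpr hy2
  calc Real.log y ≤ -2 * a := this
    _ = 2 * (y - 1) / (y + 1) := by rw [ha]; field_simp; ring

/-- With `κ₁ = (S₁-S₂)/S₂ ∈ (-1,0)` and `ρ₁₂ = N_B (S₁S₂/(S₂-S₁)) ln(S₂/S₁)`:
`Γ(N_B, ρ₁₂/S₁)/Γ(N_B) ≤ Γ(N_B, 2N_B/(2+κ₁))/Γ(N_B) ≤ Γ(N_B, N_B)/Γ(N_B)`,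
and as `S₁ → 0⁺` the bounding quantity tends to `Γ(N_B, 2N_B)/Γ(N_B)`. -/
theorem Pe_S1_high_snr_bound (N_B : ℕ) (hNB : 0 < N_B) (S₂ : ℝ) (hS₂ : 0 < S₂) :
    (∀ S₁ : ℝ, 0 < S₁ → S₁ < S₂ →
      ((S₁ - S₂) / S₂ ∈ Set.Ioo (-1 : ℝ) 0) ∧
      upperIncGamma (N_B : ℝ)
          (((N_B : ℝ) * (S₁ * S₂ / (S₂ - S₁)) * Real.log (S₂ / S₁)) / S₁) /
          Real.Gamma (N_B : ℝ) ≤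
        upperIncGamma (N_B : ℝ) (2 * (N_B : ℝ) / (2 + (S₁ - S₂) / S₂)) /
          Real.Gamma (N_B : ℝ) ∧
      upperIncGamma (N_B : ℝ) (2 * (N_B : ℝ) / (2 + (S₁ - S₂) / S₂)) /
          Real.Gamma (N_B : ℝ) ≤
        upperIncGamma (N_B : ℝ) (N_B : ℝ) / Real.Gamma (N_B : ℝ)) ∧
    Filter.Tendsto
      (fun S₁ : ℝ =>
        upperIncGamma (N_B : ℝ) (2 * (N_B : ℝ) / (2 + (S₁ - S₂) / S₂)) /
          Real.Gamma (N_B : ℝ))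
      (nhdsWithin 0 (Set.Ioi 0))
      (nhds (upperIncGamma (N_B : ℝ) (2 * (N_B : ℝ)) / Real.Gamma (N_B : ℝ))) := by
  have hNpos : (0:ℝ) < (N_B : ℝ) := by exact_mod_cast hNB
  have hNB1 : (1:ℝ) ≤ (N_B : ℝ) := by exact_mod_cast hNB
  have hGpos : 0 < Real.Gamma (N_B : ℝ) := Real.Gamma_pos_of_pos hNpos
  constructor
  · intro S₁ hS₁ hlt
    have hκ1 : (-1 : ℝ) < (S₁ - S₂) / S₂ := by
      rw [lt_div_iff₀ hS₂]; linarith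
    have hκ2 : (S₁ - S₂) / S₂ < 0 := div_neg_of_neg_of_pos (by linarith) hS₂
    have hden : 0 < 2 + (S₁ - S₂) / S₂ := by linarith
    have hArg1pos : (0:ℝ) ≤ 2 * (N_B : ℝ) / (2 + (S₁ - S₂) / S₂) :=
      div_nonneg (by positivity) hden.le
    have hlog : 2 * (S₂ - S₁) / (S₂ + S₁) ≤ Real.log (S₂ / S₁) := by
      have hy := log_le_pade (y := S₁ / S₂) (by positivity) ((div_lt_one hS₂).mpr hlt)
      have e1 : Real.log (S₂ / S₁) = - Real.log (S₁ / S₂) := by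
        rw [← Real.log_inv, inv_div]
      have e2 : 2 * ((S₁ / S₂) - 1) / ((S₁ / S₂) + 1) = -(2 * (S₂ - S₁) / (S₂ + S₁)) := by
        rw [div_eq_iff (by positivity : ((S₁ / S₂) + 1) ≠ 0)]
        field_simp
        ring
      rw [e2] at hy
      rw [e1]
      linarith
    have hle : 2 * (N_B : ℝ) / (2 + (S₁ - S₂) / S₂) ≤
        ((N_B : ℝ) * (S₁ * S₂ / (S₂ - S₁)) * Real.log (S₂ / S₁)) / S₁ := by
      have hsub : (0:ℝ) < S₂ - S₁ := by linarith
      have hsum : (0:ℝ) < S₁ + S₂ := by linarith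
      have e1 : 2 * (N_B : ℝ) / (2 + (S₁ - S₂) / S₂) = 2 * (N_B : ℝ) * S₂ / (S₁ + S₂) := by
        rw [div_eq_div_iff hden.ne' hsum.ne']; field_simp; ring
      have e2 : ((N_B : ℝ) * (S₁ * S₂ / (S₂ - S₁)) * Real.log (S₂ / S₁)) / S₁ =
          (N_B : ℝ) * S₂ * Real.log (S₂ / S₁) / (S₂ - S₁) := by
        field_simp
      rw [e1, e2, div_le_div_iff₀ hsum hsub]
      have h2 : 2 * (S₂ - S₁) ≤ Real.log (S₂ / S₁) * (S₂ + S₁) :=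
        (div_le_iff₀ (by linarith)).mp hlog
      nlinarith [mul_le_mul_of_nonneg_left h2 (by positivity : (0:ℝ) ≤ (N_B : ℝ) * S₂)]
    refine ⟨⟨hκ1, hκ2⟩, ?_, ?_⟩
    · have h := uig_anti hNpos hArg1pos hle
      gcongr
    · have hmid : (N_B : ℝ) ≤ 2 * (N_B : ℝ) / (2 + (S₁ - S₂) / S₂) := by
        rw [le_div_iff₀ hden]
        nlinarith
      have h := uig_anti hNpos hNpos.le hmid
      gcongr
  · have h2N : (0:ℝ) < 2 * (N_B : ℝ) := by positivity
    set f : ℝ → ℝ := fun t => t ^ ((N_B : ℝ) - 1) * Real.exp (-t) with hf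
    have hc : Continuous f :=
      (Real.continuous_rpow_const (by linarith)).mul (Real.continuous_exp.comp continuous_neg)
    have hprim : Continuous (fun x : ℝ => ∫ t in (0:ℝ)..x, f t) :=
      intervalIntegral.continuous_primitive (fun a b => hc.intervalIntegrable a b) 0
    have heq : ∀ x : ℝ, 0 ≤ x →
        upperIncGamma (N_B : ℝ) x = upperIncGamma (N_B : ℝ) 0 - ∫ t in (0:ℝ)..x, f t := by
      intro x hx
      rw [intervalIntegral.integral_of_le hx]
      have hsplit : (∫ t in Set.Ioc 0 x ∪ Set.Ioi x, f t) =
          (∫ t in Set.Ioc 0 x, f t) + ∫ t in Set.Ioi x, f t :=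
        setIntegral_union (Set.Ioc_disjoint_Ioi le_rfl) measurableSet_Ioi
          ((uig_integrableOn hNpos le_rfl).mono_set Set.Ioc_subset_Ioi_self)
          (uig_integrableOn hNpos hx)
      rw [Set.Ioc_union_Ioi_eq_Ioi hx] at hsplit
      unfold upperIncGamma
      rw [hsplit]
      ring
    have hG : ContinuousAt (fun x => upperIncGamma (N_B : ℝ) x) (2 * (N_B : ℝ)) := by
      have hev : (fun x : ℝ => upperIncGamma (N_B : ℝ) 0 - ∫ t in (0:ℝ)..x, f t) =ᶠ[nhds (2 * (N_B : ℝ))]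
          (fun x => upperIncGamma (N_B : ℝ) x) :=
        Filter.eventuallyEq_of_mem (Ioi_mem_nhds h2N) fun x hx => (heq x (le_of_lt hx)).symm
      exact ContinuousAt.congr ((continuous_const.sub hprim).continuousAt) hev
    have hφ : Filter.Tendsto (fun S₁ : ℝ => 2 * (N_B : ℝ) / (2 + (S₁ - S₂) / S₂))
        (nhdsWithin 0 (Set.Ioi 0)) (nhds (2 * (N_B : ℝ))) := by
      have hne : 2 + ((0:ℝ) - S₂) / S₂ ≠ 0 := by
        rw [zero_sub, neg_div, div_self hS₂.ne']; norm_num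
      have hca : ContinuousAt (fun S₁ : ℝ => 2 * (N_B : ℝ) / (2 + (S₁ - S₂) / S₂)) 0 :=
        ContinuousAt.div continuousAt_const
          (continuousAt_const.add ((continuous_id.sub continuous_const).div_const S₂).continuousAt)
          hne
      have := (hca.continuousWithinAt (s := Set.Ioi 0)).tendsto
      have hval : 2 * (N_B : ℝ) / (2 + ((0:ℝ) - S₂) / S₂) = 2 * (N_B : ℝ) := by
        rw [zero_sub, neg_div, div_self hS₂.ne']; norm_num
      rwa [hval] at this
    exact (hG.tendsto.comp hφ).div_const _
end

section
/- Fix energy levels S₁ < S₂ < … < S_{2M} with S₂ < 1 and noise N_o. For the complementary energy levels defined by S̄_ℓ = η_j + N_o when i = 0 and S̄_ℓ = (1-α) + ε_j + N_o when i = 1 (with corresponding index mapping), every complementary level is nonnegative for all valid (i,j) if and only if α ≥ 1 - S₂. Consequently, since the upper-bounded error probability P'_e is increasing in α, the optimal feasible α equals 1 - S₂. -/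
/-- Theorem 4: with energy levels `S₁ < … < S_{2M}`, `S₂ < 1`, the complementary
energy levels (`η_j + N_o` for `i = 0` and `(1-α) + ε_j + N_o` for `i = 1`, with
`ε_j = S_{ℓ₀(j)} - N_o`, `η_j = S_{ℓ₁(j)} - (1-α) - N_o`) are all nonnegative
iff `α ≥ 1 - S₂`; consequently, for any error bound `P'_e` increasing in `α`, the
optimal feasible `α` equals `1 - S₂`. -/
theorem optimal_alpha (M : ℕ) (hM : 0 < M) (No : ℝ) (hNo : 0 < No)
    (S : ℤ → ℝ)
    (hmono : StrictMonoOn S (Set.Icc (1 : ℤ) (2 * M)))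
    (hS1 : 0 < S 1) (hS2 : S 2 < 1)
    (ε : ℤ → ℝ) (η : ℝ → ℤ → ℝ)
    (hε : ∀ j ∈ Finset.Icc (1 : ℤ) (M : ℤ),
      ε j = S ((4 * j + (-1) ^ j.toNat - 1) / 2) - No)
    (hη : ∀ α : ℝ, ∀ j ∈ Finset.Icc (1 : ℤ) (M : ℤ),
      η α j = S (((-1) ^ j.toNat *
          (4 * (-1) ^ j.toNat * j + (-1) ^ (j.toNat + 1) - 1)) / 2) - (1 - α) - No) :
    (∀ α ∈ Set.Ioo (0 : ℝ) 1,
      ((∀ j ∈ Finset.Icc (1 : ℤ) (M : ℤ),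
          0 ≤ η α j + No ∧ 0 ≤ (1 - α) + ε j + No) ↔ 1 - S 2 ≤ α)) ∧
    (∀ P : ℝ → ℝ, MonotoneOn P (Set.Icc (1 - S 2) 1) →
      ∀ α ∈ Set.Ioo (0 : ℝ) 1,
        (∀ j ∈ Finset.Icc (1 : ℤ) (M : ℤ),
          0 ≤ η α j + No ∧ 0 ≤ (1 - α) + ε j + No) →
        P (1 - S 2) ≤ P α) := by
  have hM1 : (1 : ℤ) ≤ M := by exact_mod_cast hM
  have h2mem : (2 : ℤ) ∈ Set.Icc (1 : ℤ) (2 * M) := ⟨by norm_num, by omega⟩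
  have h1mem : (1 : ℤ) ∈ Set.Icc (1 : ℤ) (2 * M) := ⟨le_refl _, by omega⟩
  -- index computation
  have key : ∀ j ∈ Finset.Icc (1 : ℤ) (M : ℤ),
      ∃ a b : ℤ,
      (4 * j + (-1) ^ j.toNat - 1) / 2 = a ∧
      ((-1) ^ j.toNat * (4 * (-1) ^ j.toNat * j + (-1) ^ (j.toNat + 1) - 1)) / 2 = b ∧
      1 ≤ a ∧ a ≤ 2 * M ∧ 2 ≤ b ∧ b ≤ 2 * M := by
    intro j hj
    rw [Finset.mem_Icc] at hj
    obtain ⟨hj1, hj2⟩ := hj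
    obtain ⟨n, hn⟩ : ∃ n : ℕ, j = (n : ℤ) := ⟨j.toNat, (Int.toNat_of_nonneg (by omega)).symm⟩
    have htn : j.toNat = n := by omega
    rcases Nat.even_or_odd n with he | ho
    · have hp1 : ((-1 : ℤ)) ^ j.toNat = 1 := by rw [htn]; exact he.neg_one_pow
      have hp2 : ((-1 : ℤ)) ^ (j.toNat + 1) = -1 := by
        rw [htn]; exact (Even.add_one he).neg_one_pow
      have hjev : ∃ k : ℕ, n = k + k := he
      obtain ⟨k, hk⟩ := hjev
      refine ⟨2 * j, 2 * j - 1, ?_, ?_, by omega, by omega, by omega, by omega⟩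
      · rw [hp1]; omega
      · rw [hp1, hp2]; norm_num; omega
    · have hp1 : ((-1 : ℤ)) ^ j.toNat = -1 := by rw [htn]; exact ho.neg_one_pow
      have hp2 : ((-1 : ℤ)) ^ (j.toNat + 1) = 1 := by
        rw [htn]; exact (Odd.add_one ho).neg_one_pow
      refine ⟨2 * j - 1, 2 * j, ?_, ?_, by omega, by omega, by omega, by omega⟩
      · rw [hp1]; omega
      · rw [hp1, hp2]; norm_num; omega
  have h1M : (1 : ℤ) ∈ Finset.Icc (1 : ℤ) (M : ℤ) := by
    rw [Finset.mem_Icc]; omega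
  have hidx1 : ((-1 : ℤ) ^ (1 : ℤ).toNat *
      (4 * (-1) ^ (1 : ℤ).toNat * 1 + (-1) ^ ((1 : ℤ).toNat + 1) - 1)) / 2 = 2 := by
    norm_num
  have main : ∀ α ∈ Set.Ioo (0 : ℝ) 1,
      ((∀ j ∈ Finset.Icc (1 : ℤ) (M : ℤ),
          0 ≤ η α j + No ∧ 0 ≤ (1 - α) + ε j + No) ↔ 1 - S 2 ≤ α) := by
    intro α hα
    constructor
    · intro hc
      have h := (hc 1 h1M).1
      rw [hη α 1 h1M, hidx1] at h
      linarith
    · intro hle j hj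
      obtain ⟨a, b, ha, hb, ha1, ha2, hb1, hb2⟩ := key j hj
      rw [hη α j hj, hb, hε j hj, ha]
      constructor
      · have hS2b : S 2 ≤ S b := hmono.monotoneOn h2mem ⟨by omega, hb2⟩ hb1
        linarith
      · have hS1a : S 1 ≤ S a := hmono.monotoneOn h1mem ⟨ha1, ha2⟩ ha1
        have : α < 1 := hα.2
        linarith
  refine ⟨main, ?_⟩
  intro P hP α hα hc
  have h12 : S 1 < S 2 := hmono h1mem h2mem (by norm_num)
  have hle : 1 - S 2 ≤ α := (main α hα).mp hc
  exact hP ⟨le_refl _, by linarith⟩ ⟨hle, le_of_lt hα.2⟩ hle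
end

section
/- Let S₂ < S₃ be positive reals with S₂ = η₁ + c and S₃ = 1 - α + η₂ + c for constants c > 0, η₁ > 0, α ∈ (0,1), and variable η₂ > η₁. Define κ₃ = (S₂ - S₃)/S₃ ∈ (-1, 0). Then κ₃ is strictly decreasing in η₂ (dκ₃/dη₂ = -S₂/S₃² < 0), ln(1+κ₃)/κ₃ is strictly increasing in η₂, and hence ρ₂₃/S₂ = N_B·ln(1+κ₃)/κ₃ is strictly increasing in η₂; consequently P_{e,S₂} = Γ(N_B, ρ₂₃/S₂)/Γ(N_B) is strictly decreasing in η₂. -/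
open MeasureTheory in
lemma upperIncGamma_strictAnti {s a b : ℝ} (hs : 0 < s) (ha : 0 < a) (hab : a < b) :
    upperIncGamma s b < upperIncGamma s a := by
  have hint : IntegrableOn (fun t : ℝ => t ^ (s - 1) * Real.exp (-t)) (Set.Ioi a) := by
    have := (Real.GammaIntegral_convergent hs).mono_set (Set.Ioi_subset_Ioi ha.le)
    exact this.congr_fun (fun x _ => mul_comm _ _) measurableSet_Ioi
  have hsplit : Set.Ioc a b ∪ Set.Ioi b = Set.Ioi a := Set.Ioc_union_Ioi_eq_Ioi hab.le
  have hdisj : Disjoint (Set.Ioc a b) (Set.Ioi b) := Set.Ioc_disjoint_Ioi le_rfl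
  have h1 : IntegrableOn (fun t : ℝ => t ^ (s - 1) * Real.exp (-t)) (Set.Ioc a b) :=
    hint.mono_set (by rw [← hsplit]; exact Set.subset_union_left)
  have h2 : IntegrableOn (fun t : ℝ => t ^ (s - 1) * Real.exp (-t)) (Set.Ioi b) :=
    hint.mono_set (by rw [← hsplit]; exact Set.subset_union_right)
  have heq : upperIncGamma s a =
      (∫ t in Set.Ioc a b, t ^ (s - 1) * Real.exp (-t)) + upperIncGamma s b := by
    rw [upperIncGamma, upperIncGamma, ← hsplit,
      setIntegral_union hdisj measurableSet_Ioi h1 h2]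
  have hpos : 0 < ∫ t in Set.Ioc a b, t ^ (s - 1) * Real.exp (-t) := by
    rw [← intervalIntegral.integral_of_le hab.le]
    apply intervalIntegral.intervalIntegral_pos_of_pos_on
    · exact (intervalIntegrable_iff_integrableOn_Ioc_of_le hab.le).mpr h1
    · intro x hx
      have hx0 : 0 < x := ha.trans hx.1
      positivity
    · exact hab
  linarith

lemma log_div_strictAntiOn :
    StrictAntiOn (fun x : ℝ => Real.log (1 + x) / x) (Set.Ioo (-1 : ℝ) 0) := by
  have hconv : Convex ℝ (Set.Ioo (-1 : ℝ) 0) := convex_Ioo _ _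
  have hd : ∀ x ∈ Set.Ioo (-1 : ℝ) 0, HasDerivAt (fun x : ℝ => Real.log (1 + x) / x)
      ((1 / (1 + x) * x - Real.log (1 + x) * 1) / x ^ 2) x := by
    intro x hx
    have hx1 : 0 < 1 + x := by linarith [hx.1]
    have hlogd : HasDerivAt (fun y : ℝ => Real.log (1 + y)) (1 / (1 + x)) x := by
      have := (Real.hasDerivAt_log hx1.ne').comp x ((hasDerivAt_id x).const_add 1)
      simpa [Function.comp_def, one_div] using this
    exact HasDerivAt.div hlogd (hasDerivAt_id x) hx.2.ne
  apply strictAntiOn_of_deriv_neg hconv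
  · exact fun x hx => (hd x hx).continuousAt.continuousWithinAt
  · intro x hx
    rw [interior_Ioo] at hx
    have hx1 : 0 < 1 + x := by linarith [hx.1]
    have hx2 : x < 0 := hx.2
    rw [(hd x hx).deriv]
    have hlog : x / (1 + x) < Real.log (1 + x) := by
      have := Real.log_lt_sub_one_of_pos (x := (1 + x)⁻¹) (by positivity)
        (by intro h; apply hx2.ne; field_simp at h; linarith)
      rw [Real.log_inv] at this
      have h2 : (1 + x)⁻¹ - 1 = -(x / (1 + x)) := by field_simp; ring
      rw [h2] at this; linarith
    apply div_neg_of_neg_of_pos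
    · have : 1 / (1 + x) * x = x / (1 + x) := by ring
      rw [this]; linarith
    · exact pow_two_pos_of_ne_zero hx2.ne

/-- With `S₂ = η₁ + c` and `S₃(η₂) = 1 - α + η₂ + c`, the quantity
`κ₃(η₂) = (S₂ - S₃)/S₃ ∈ (-1,0)` is strictly decreasing in `η₂` with derivative
`-S₂/S₃²`; `ln(1+κ₃)/κ₃` and hence `ρ₂₃/S₂ = N_B ln(1+κ₃)/κ₃` are strictly
increasing in `η₂`; and `P_{e,S₂} = Γ(N_B, ρ₂₃/S₂)/Γ(N_B)` is strictly
decreasing in `η₂`. -/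
theorem Pe_S2_decreasing_in_eta2 (N_B : ℕ) (hNB : 0 < N_B)
    (c η₁ α : ℝ) (hc : 0 < c) (hη₁ : 0 < η₁) (hα : α ∈ Set.Ioo (0 : ℝ) 1)
    (S₂ : ℝ) (hS₂ : S₂ = η₁ + c)
    (S₃ κ₃ : ℝ → ℝ)
    (hS₃ : ∀ η₂, S₃ η₂ = 1 - α + η₂ + c)
    (hκ₃ : ∀ η₂, κ₃ η₂ = (S₂ - S₃ η₂) / S₃ η₂) :
    (∀ η₂ ∈ Set.Ioi η₁, κ₃ η₂ ∈ Set.Ioo (-1 : ℝ) 0) ∧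
    (∀ η₂ ∈ Set.Ioi η₁, HasDerivAt κ₃ (-S₂ / (S₃ η₂) ^ 2) η₂) ∧
    StrictAntiOn κ₃ (Set.Ioi η₁) ∧
    StrictMonoOn (fun η₂ => Real.log (1 + κ₃ η₂) / κ₃ η₂) (Set.Ioi η₁) ∧
    StrictMonoOn (fun η₂ => (N_B : ℝ) * (Real.log (1 + κ₃ η₂) / κ₃ η₂)) (Set.Ioi η₁) ∧
    StrictAntiOn (fun η₂ =>
      upperIncGamma (N_B : ℝ) ((N_B : ℝ) * (Real.log (1 + κ₃ η₂) / κ₃ η₂)) /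
        Real.Gamma (N_B : ℝ)) (Set.Ioi η₁) := by
  obtain ⟨hα0, hα1⟩ := hα
  have hS₂pos : 0 < S₂ := by rw [hS₂]; linarith
  have hS₃pos : ∀ η₂ ∈ Set.Ioi η₁, 0 < S₃ η₂ := fun η₂ hη => by
    rw [hS₃]; have := Set.mem_Ioi.mp hη; linarith
  have hS₂S₃ : ∀ η₂ ∈ Set.Ioi η₁, S₂ < S₃ η₂ := fun η₂ hη => by
    rw [hS₂, hS₃]; have := Set.mem_Ioi.mp hη; linarith
  -- part 1
  have part1 : ∀ η₂ ∈ Set.Ioi η₁, κ₃ η₂ ∈ Set.Ioo (-1 : ℝ) 0 := by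
    intro η₂ hη
    have h3 := hS₃pos η₂ hη
    have h23 := hS₂S₃ η₂ hη
    rw [hκ₃]
    constructor
    · rw [lt_div_iff₀ h3]; linarith
    · apply div_neg_of_neg_of_pos (by linarith) h3
  -- part 2
  have part2 : ∀ η₂ ∈ Set.Ioi η₁, HasDerivAt κ₃ (-S₂ / (S₃ η₂) ^ 2) η₂ := by
    intro η₂ hη
    have h3 := hS₃pos η₂ hη
    have hfun : κ₃ = fun η => (S₂ - (1 - α + η + c)) / (1 - α + η + c) :=
      funext fun η => by rw [hκ₃, hS₃]
    rw [hfun]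
    have hd : HasDerivAt (fun η : ℝ => (S₂ - (1 - α + η + c)) / (1 - α + η + c))
        (((-1) * (1 - α + η₂ + c) - (S₂ - (1 - α + η₂ + c)) * 1) /
          (1 - α + η₂ + c) ^ 2) η₂ := by
      apply HasDerivAt.div
      · simpa using ((hasDerivAt_id η₂).const_add (1 - α)).add_const c |>.const_sub S₂
      · simpa using ((hasDerivAt_id η₂).const_add (1 - α)).add_const c
      · rw [hS₃] at h3; exact h3.ne'
    convert hd using 1
    rw [hS₃]; ring
  -- part 3
  have part3 : StrictAntiOn κ₃ (Set.Ioi η₁) := by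
    apply strictAntiOn_of_deriv_neg (convex_Ioi η₁)
    · exact fun η hη => ((part2 η hη).continuousAt.continuousWithinAt)
    · intro η hη
      rw [interior_Ioi] at hη
      rw [(part2 η hη).deriv]
      have h3 := hS₃pos η hη
      apply div_neg_of_neg_of_pos (by linarith) (by positivity)
  -- part 4
  have part4 : StrictMonoOn (fun η₂ => Real.log (1 + κ₃ η₂) / κ₃ η₂) (Set.Ioi η₁) := by
    intro a ha b hb hab
    exact log_div_strictAntiOn (part1 b hb) (part1 a ha) (part3 ha hb hab)
  -- part 5
  have part5 : StrictMonoOn (fun η₂ => (N_B : ℝ) * (Real.log (1 + κ₃ η₂) / κ₃ η₂))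
      (Set.Ioi η₁) := by
    intro a ha b hb hab
    have hN : (0 : ℝ) < N_B := Nat.cast_pos.mpr hNB
    exact mul_lt_mul_of_pos_left (part4 ha hb hab) hN
  -- positivity of the argument
  have hargpos : ∀ η₂ ∈ Set.Ioi η₁, 0 < (N_B : ℝ) * (Real.log (1 + κ₃ η₂) / κ₃ η₂) := by
    intro η₂ hη
    have hκ := part1 η₂ hη
    have hN : (0 : ℝ) < N_B := Nat.cast_pos.mpr hNB
    apply mul_pos hN
    apply div_pos_of_neg_of_neg _ hκ.2
    apply Real.log_neg (by linarith [hκ.1]) (by linarith [hκ.2])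
  refine ⟨part1, part2, part3, part4, part5, ?_⟩
  intro a ha b hb hab
  have hN : (0 : ℝ) < N_B := Nat.cast_pos.mpr hNB
  have hΓ : 0 < Real.Gamma (N_B : ℝ) := Real.Gamma_pos_of_pos hN
  have := upperIncGamma_strictAnti (s := (N_B : ℝ)) hN (hargpos a ha) (part5 ha hb hab)
  exact div_lt_div_of_pos_right this hΓ
end

section
/- Let N ≥ 1 be an integer, let 0 < Ω₀ < Ω₁, let θ = (Ω₁-Ω₀)/Ω₀ > 0 and let ν = N·(Ω₀Ω₁/(Ω₀-Ω₁))·ln(Ω₀/Ω₁). If r ∈ ℂ^N has i.i.d. CN(0, Ω₀) entries, then Pr(r^H r > ν) = Γ(N, ν/Ω₀)/Γ(N) = Γ(N, N·ln(1+θ)·(1+θ)/θ)/Γ(N). If r has i.i.d. CN(0, Ω₁) entries, then Pr(r^H r ≤ ν) = γ(N, ν/Ω₁)/Γ(N) = γ(N, N·ln(1+θ)/θ)/Γ(N). Moreover ν/Ω₀ > N > ν/Ω₁ > 0, so these two probabilities are strictly less than Γ(N,N)/Γ(N) and γ(N,N)/Γ(N) respectively. -/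
open MeasureTheory ProbabilityTheory

/-- The zero-mean circularly-symmetric complex Gaussian measure `CN(0, σ²)`. -/
noncomputable def complexGaussian (σ2 : ℝ) : Measure ℂ :=
  Measure.map (fun p : ℝ × ℝ => (⟨p.1, p.2⟩ : ℂ))
    ((gaussianReal 0 (σ2 / 2).toNNReal).prod (gaussianReal 0 (σ2 / 2).toNNReal))

/-- Lower incomplete gamma function. -/
noncomputable def lowerIncGamma (s x : ℝ) : ℝ :=
  ∫ t in Set.Ioc 0 x, t ^ (s - 1) * Real.exp (-t)


open MeasureTheory ProbabilityTheory Set Real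
open scoped ENNReal NNReal

lemma prod_withDensity {f g : ℝ → ℝ≥0∞} (hf : Measurable f) (hg : Measurable g) :
    ((volume.withDensity f).prod (volume.withDensity g)) =
      (volume.prod volume).withDensity (fun p => f p.1 * g p.2) := by
  ext s hs
  rw [Measure.prod_apply hs, withDensity_apply _ hs]
  have h1 : ∀ x : ℝ, (volume.withDensity g) (Prod.mk x ⁻¹' s)
      = ∫⁻ y, s.indicator (fun _ => (1:ℝ≥0∞)) (x, y) * g y := by
    intro x
    rw [withDensity_apply _ (measurable_prodMk_left hs), ← lintegral_indicator
      (measurable_prodMk_left hs)]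
    congr 1; ext y
    by_cases hxy : (x, y) ∈ s <;> simp [Set.indicator_apply, hxy]
  simp_rw [h1]
  have hind : Measurable (fun p : ℝ × ℝ => s.indicator (fun _ => (1:ℝ≥0∞)) p) :=
    measurable_const.indicator hs
  rw [lintegral_withDensity_eq_lintegral_mul _ hf]
  · rw [← MeasureTheory.lintegral_indicator hs, MeasureTheory.lintegral_prod]
    · congr 1; ext x
      simp only [Pi.mul_apply]
      have hmeas : Measurable fun y : ℝ => s.indicator (fun _ => (1:ℝ≥0∞)) (x, y) * g y :=
        (hind.comp (measurable_prodMk_left)).mul hg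
      rw [← lintegral_const_mul _ hmeas]
      congr 1; ext y
      by_cases hxy : (x, y) ∈ s <;> simp [Set.indicator_apply, hxy, mul_comm, mul_left_comm]
    · exact (((hf.comp measurable_fst).mul (hg.comp measurable_snd)).indicator hs).aemeasurable
  · exact Measurable.lintegral_prod_right
      ((hind.comp (measurable_fst.prodMk measurable_snd)).mul (hg.comp measurable_snd))

lemma measurable_gammaPDF (a r : ℝ) : Measurable (gammaPDF a r) :=
  (measurable_gammaPDFReal a r).ennreal_ofReal

lemma conv_pdf (n : ℕ) (hn : 1 ≤ n) {l : ℝ} (hl : 0 < l) (z : ℝ) :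
    ∫⁻ x, gammaPDF 1 l x * gammaPDF (n : ℝ) l (z - x) = gammaPDF ((n : ℝ) + 1) l z := by
  have hnR : (0:ℝ) < n := by exact_mod_cast hn
  rcases le_or_gt z 0 with hz | hz
  · -- both sides vanish
    have hrhs : gammaPDF ((n : ℝ) + 1) l z = 0 := by
      rcases lt_or_eq_of_le hz with hz' | hz'
      · exact gammaPDF_of_neg hz'
      · rw [hz', gammaPDF_of_nonneg le_rfl, show (n:ℝ) + 1 - 1 = (n:ℝ) by ring,
          Real.zero_rpow hnR.ne']
        simp
    rw [hrhs]
    have hsub : Set.Icc (0:ℝ) z ⊆ {0} := by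
      intro x hx
      have : x = 0 := le_antisymm (hx.2.trans hz) hx.1
      simp [this]
    have hnull : (volume : Measure ℝ) (Set.Icc (0:ℝ) z) = 0 :=
      measure_mono_null hsub (measure_singleton 0)
    rw [← lintegral_zero]
    apply lintegral_congr_ae
    filter_upwards [measure_eq_zero_iff_ae_notMem.mp hnull] with x hx
    rcases lt_or_ge x 0 with h | h
    · rw [gammaPDF_of_neg h, zero_mul]
    · rcases lt_or_ge (z - x) 0 with h2 | h2
      · rw [gammaPDF_of_neg h2, mul_zero]
      · exact absurd ⟨h, by linarith⟩ hx
  · -- z > 0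
    set m : ℕ := n - 1 with hm
    have hnm : (m : ℝ) = (n : ℝ) - 1 := by
      have : (m + 1 : ℕ) = n := Nat.succ_pred_eq_of_pos hn
      push_cast [← this]; ring
    have hΓpos := Real.Gamma_pos_of_pos hnR
    set C : ℝ := l * Real.exp (-(l * z)) * (l ^ (n:ℝ) / Gamma n) with hC
    have pdf1 : ∀ x : ℝ, 0 ≤ x → gammaPDF 1 l x = ENNReal.ofReal (l * Real.exp (-(l * x))) := by
      intro x hx
      rw [gammaPDF_of_nonneg hx]
      norm_num [Real.Gamma_one, Real.rpow_one, Real.rpow_zero]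
    have key : ∀ x : ℝ, gammaPDF 1 l x * gammaPDF (n : ℝ) l (z - x)
        = ENNReal.ofReal ((Set.Icc 0 z).indicator (fun x => C * (z - x) ^ m) x) := by
      intro x
      by_cases hx : x ∈ Set.Icc (0:ℝ) z
      · rw [Set.indicator_of_mem hx]
        rw [pdf1 x hx.1, gammaPDF_of_nonneg (by linarith [hx.2] : (0:ℝ) ≤ z - x),
          ← ENNReal.ofReal_mul (by positivity)]
        congr 1
        rw [show (n:ℝ) - 1 = (m:ℝ) from hnm.symm, Real.rpow_natCast (z - x) m]
        have hexp : Real.exp (-(l * x)) * Real.exp (-(l * (z - x))) = Real.exp (-(l * z)) := by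
          rw [← Real.exp_add]; ring_nf
        rw [hC]
        linear_combination (l * (l ^ (n:ℝ) / Gamma (n:ℝ)) * (z - x) ^ m) * hexp
      · rw [Set.indicator_of_notMem hx, ENNReal.ofReal_zero]
        simp only [Set.mem_Icc, not_and_or, not_le] at hx
        rcases hx with h | h
        · rw [gammaPDF_of_neg h, zero_mul]
        · rw [gammaPDF_of_neg (by linarith : z - x < 0), mul_zero]
    simp_rw [key]
    rw [← ofReal_integral_eq_lintegral_ofReal]
    · rw [MeasureTheory.integral_indicator measurableSet_Icc]
      have hint : ∫ x in Set.Icc (0:ℝ) z, C * (z - x) ^ m = C * (z ^ (m+1) / (m+1)) := by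
        rw [MeasureTheory.integral_Icc_eq_integral_Ioc,
          ← intervalIntegral.integral_of_le hz.le, intervalIntegral.integral_const_mul,
          intervalIntegral.integral_comp_sub_left (fun x => x ^ m) z]
        simp only [sub_zero, sub_self]
        rw [integral_pow]
        ring_nf
      rw [hint, gammaPDF_of_nonneg hz.le]
      congr 1
      have hΓn : Real.Gamma ((n:ℝ) + 1) = n * Real.Gamma n := Real.Gamma_add_one hnR.ne'
      have hz1 : z ^ ((n:ℝ) + 1 - 1) = z ^ n := by
        rw [show (n:ℝ) + 1 - 1 = ((n:ℕ):ℝ) by ring, Real.rpow_natCast]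
      have hzm : z ^ (m + 1) = z ^ n := by rw [show m + 1 = n from Nat.succ_pred_eq_of_pos hn]
      have hmn : ((m:ℝ) + 1) = (n:ℝ) := by rw [hnm]; ring
      have hlp := Real.rpow_pos_of_pos hl (n:ℝ)
      have hrp : l ^ ((n:ℝ)+1) = l * l ^ (n:ℝ) := by
        rw [Real.rpow_add hl, Real.rpow_one]; ring
      rw [hC, hΓn, hz1, hzm, hmn, hrp]
      field_simp
    · exact (continuous_const.mul ((continuous_const.sub continuous_id).pow m)).integrableOn_Icc
        |>.integrable_indicator measurableSet_Icc
    · refine Filter.Eventually.of_forall fun x => ?_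
      apply Set.indicator_nonneg
      intro y hy
      have h1 : 0 ≤ z - y := by linarith [hy.2]
      have h2 : (0:ℝ) < l ^ (n:ℝ) := Real.rpow_pos_of_pos hl _
      positivity

lemma conv_gamma (n : ℕ) (hn : 1 ≤ n) {l : ℝ} (hl : 0 < l) :
    Measure.map (fun p : ℝ × ℝ => p.1 + p.2)
      ((gammaMeasure 1 l).prod (gammaMeasure (n : ℝ) l)) = gammaMeasure ((n : ℝ) + 1) l := by
  have hnR : (0:ℝ) < n := by exact_mod_cast hn
  have hf := measurable_gammaPDF 1 l
  have hg := measurable_gammaPDF (n : ℝ) l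
  ext s hs
  rw [Measure.map_apply (show Measurable (fun p : ℝ × ℝ => p.1 + p.2) from measurable_fst.add measurable_snd) hs]
  show ((volume.withDensity (gammaPDF 1 l)).prod (volume.withDensity (gammaPDF (n:ℝ) l)))
      ((fun p : ℝ × ℝ => p.1 + p.2) ⁻¹' s) = _
  rw [prod_withDensity hf hg,
    withDensity_apply _ ((show Measurable (fun p : ℝ × ℝ => p.1 + p.2) from measurable_fst.add measurable_snd) hs)]
  have hA : MeasurableSet ((fun p : ℝ × ℝ => p.1 + p.2) ⁻¹' s) :=
    (measurable_fst.add measurable_snd) hs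
  have hm : Measurable (fun a : ℝ × ℝ => gammaPDF 1 l a.1 * gammaPDF (n:ℝ) l a.2) :=
    (hf.comp measurable_fst).mul (hg.comp measurable_snd)
  rw [← lintegral_indicator hA, MeasureTheory.lintegral_prod _ (hm.indicator hA).aemeasurable]
  have step1 : ∀ x : ℝ, ∫⁻ y, ((fun p : ℝ × ℝ => p.1 + p.2) ⁻¹' s).indicator
      (fun p => gammaPDF 1 l p.1 * gammaPDF (n:ℝ) l p.2) (x, y)
      = ∫⁻ z, s.indicator (fun _ => (1:ℝ≥0∞)) z * (gammaPDF 1 l x * gammaPDF (n:ℝ) l (z - x)) := by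
    intro x
    have : ∀ y : ℝ, ((fun p : ℝ × ℝ => p.1 + p.2) ⁻¹' s).indicator
        (fun p => gammaPDF 1 l p.1 * gammaPDF (n:ℝ) l p.2) (x, y)
        = (fun z => s.indicator (fun _ => (1:ℝ≥0∞)) z *
            (gammaPDF 1 l x * gammaPDF (n:ℝ) l (z - x))) (x + y) := by
      intro y
      by_cases hxy : x + y ∈ s <;>
        simp [Set.indicator_apply, hxy, Set.mem_preimage]
    simp_rw [this]
    exact lintegral_add_left_eq_self
      (fun z => s.indicator (fun _ => (1:ℝ≥0∞)) z * (gammaPDF 1 l x * gammaPDF (n:ℝ) l (z - x))) x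
  simp_rw [step1]
  rw [lintegral_lintegral_swap]
  · have step2 : ∀ z : ℝ, ∫⁻ x, s.indicator (fun _ => (1:ℝ≥0∞)) z *
        (gammaPDF 1 l x * gammaPDF (n:ℝ) l (z - x))
        = s.indicator (fun _ => (1:ℝ≥0∞)) z * gammaPDF ((n:ℝ)+1) l z := by
      intro z
      have hmx : Measurable fun x : ℝ => gammaPDF 1 l x * gammaPDF (n:ℝ) l (z - x) :=
        hf.mul (hg.comp (measurable_const.sub measurable_id))
      rw [lintegral_const_mul _ hmx, conv_pdf n hn hl z]
    simp_rw [step2]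
    have : ∀ z : ℝ, s.indicator (fun _ => (1:ℝ≥0∞)) z * gammaPDF ((n:ℝ)+1) l z
        = s.indicator (gammaPDF ((n:ℝ)+1) l) z := by
      intro z
      by_cases hz : z ∈ s <;> simp [Set.indicator_apply, hz]
    simp_rw [this]
    rw [lintegral_indicator hs]
    show _ = (volume.withDensity (gammaPDF ((n:ℝ)+1) l)) s
    rw [withDensity_apply _ hs]
  · apply Measurable.aemeasurable
    apply Measurable.mul
    · exact (measurable_const.indicator hs).comp measurable_snd
    · exact ((hf.comp measurable_fst)).mul (hg.comp (measurable_snd.sub measurable_fst))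

lemma map_sum_pi (n : ℕ) (hn : 1 ≤ n) {l : ℝ} (hl : 0 < l) :
    Measure.map (fun x : Fin n → ℝ => ∑ i, x i) (Measure.pi fun _ : Fin n => gammaMeasure 1 l)
      = gammaMeasure (n : ℝ) l := by
  haveI : IsProbabilityMeasure (gammaMeasure 1 l) := isProbabilityMeasure_gammaMeasure one_pos hl
  induction n, hn using Nat.le_induction with
  | base =>
    have h := (measurePreserving_piUnique (fun _ : Fin 1 => gammaMeasure 1 l)).map_eq
    have : (fun x : Fin 1 → ℝ => ∑ i, x i) = fun x : Fin 1 → ℝ => x default := by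
      funext x; rw [Fin.sum_univ_one]; rfl
    rw [this]
    rw [show ((1:ℕ):ℝ) = (1:ℝ) by norm_num]
    exact h
  | succ n hn ih =>
    haveI : IsProbabilityMeasure (gammaMeasure (n:ℝ) l) :=
      isProbabilityMeasure_gammaMeasure (by exact_mod_cast hn) hl
    have he := (measurePreserving_piFinSuccAbove (fun _ : Fin (n+1) => gammaMeasure 1 l) 0).map_eq
    set e := MeasurableEquiv.piFinSuccAbove (fun _ : Fin (n+1) => ℝ) 0 with hedef
    have hcomp : (fun x : Fin (n+1) → ℝ => ∑ i, x i)
        = (fun p : ℝ × (Fin n → ℝ) => p.1 + ∑ i, p.2 i) ∘ ⇑e := by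
      funext x
      have hx : e x = (x 0, fun j : Fin n => x j.succ) := rfl
      rw [Function.comp_apply, hx, Fin.sum_univ_succ]
    rw [hcomp, ← Measure.map_map (by
        exact measurable_fst.add (Finset.measurable_sum Finset.univ fun i _ =>
          (measurable_pi_apply i).comp measurable_snd)) e.measurable, he]
    have hsum : Measurable (fun y : Fin n → ℝ => ∑ i, y i) :=
      Finset.measurable_sum Finset.univ fun i _ => measurable_pi_apply i
    have hprodmap : Measure.map (Prod.map id (fun y : Fin n → ℝ => ∑ i, y i))
        ((gammaMeasure 1 l).prod (Measure.pi fun _ : Fin n => gammaMeasure 1 l))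
        = (gammaMeasure 1 l).prod (gammaMeasure (n:ℝ) l) := by
      rw [← Measure.map_prod_map _ _ measurable_id hsum, Measure.map_id, ih]
    have hdecomp : (fun p : ℝ × (Fin n → ℝ) => p.1 + ∑ i, p.2 i)
        = (fun q : ℝ × ℝ => q.1 + q.2) ∘ (Prod.map id (fun y : Fin n → ℝ => ∑ i, y i)) := by
      funext p; rfl
    rw [hdecomp, ← Measure.map_map (show Measurable (fun q : ℝ × ℝ => q.1 + q.2) from measurable_fst.add measurable_snd)
      (measurable_id.prodMap hsum), hprodmap, conv_gamma n hn hl]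
    norm_num

lemma measurable_mk : Measurable (fun p : ℝ × ℝ => (⟨p.1, p.2⟩ : ℂ)) := by
  have : (fun p : ℝ × ℝ => (⟨p.1, p.2⟩ : ℂ))
      = fun p => (p.1 : ℂ) + (p.2 : ℂ) * Complex.I := by
    funext p; rw [Complex.mk_eq_add_mul_I]
  rw [this]
  exact (Complex.measurable_ofReal.comp measurable_fst).add
    ((Complex.measurable_ofReal.comp measurable_snd).mul_const Complex.I)

instance complexGaussian_prob (Ω : ℝ) : IsProbabilityMeasure (complexGaussian Ω) := by
  unfold complexGaussian
  exact Measure.isProbabilityMeasure_map measurable_mk.aemeasurable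

lemma map_normSq {Ω : ℝ} (hΩ : 0 < Ω) :
    Measure.map Complex.normSq (complexGaussian Ω) = gammaMeasure 1 Ω⁻¹ := by
  have hΩinv : 0 < Ω⁻¹ := inv_pos.mpr hΩ
  set v : ℝ≥0 := (Ω/2).toNNReal with hvdef
  have hvr : (v : ℝ) = Ω / 2 := Real.coe_toNNReal _ (by positivity)
  have hv : v ≠ 0 := by
    intro h
    rw [h] at hvr
    norm_num at hvr
    linarith
  have h2v : 2 * (v : ℝ) = Ω := by rw [hvr]; ring
  have hq : Measurable (fun p : ℝ × ℝ => p.1 ^ 2 + p.2 ^ 2) :=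
    (measurable_fst.pow_const 2).add (measurable_snd.pow_const 2)
  have hmns : Measurable Complex.normSq := Complex.continuous_normSq.measurable
  rw [complexGaussian, Measure.map_map hmns measurable_mk]
  have hcomp : (Complex.normSq ∘ fun p : ℝ × ℝ => (⟨p.1, p.2⟩ : ℂ))
      = fun p : ℝ × ℝ => p.1 ^ 2 + p.2 ^ 2 := by
    funext p
    simp only [Function.comp_apply, Complex.normSq_mk]
    ring
  rw [hcomp]
  haveI : IsProbabilityMeasure (Measure.map (fun p : ℝ × ℝ => p.1 ^ 2 + p.2 ^ 2)
      ((gaussianReal 0 v).prod (gaussianReal 0 v))) :=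
    Measure.isProbabilityMeasure_map hq.aemeasurable
  apply Measure.ext_of_Iic
  intro t
  rw [Measure.map_apply hq measurableSet_Iic]
  have hRHS : gammaMeasure 1 Ω⁻¹ (Iic t)
      = ENNReal.ofReal (if 0 ≤ t then 1 - Real.exp (-(Ω⁻¹ * t)) else 0) := by
    rw [show gammaMeasure 1 Ω⁻¹ = expMeasure Ω⁻¹ from rfl, expMeasure,
      show gammaMeasure 1 Ω⁻¹ = volume.withDensity (gammaPDF 1 Ω⁻¹) from rfl,
      withDensity_apply _ measurableSet_Iic]
    exact lintegral_exponentialPDF_eq_antiDeriv hΩinv t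
  rw [hRHS]
  rcases lt_or_ge t 0 with ht | ht
  · rw [if_neg (not_le.mpr ht)]
    have hempty : (fun p : ℝ × ℝ => p.1 ^ 2 + p.2 ^ 2) ⁻¹' Iic t = ∅ := by
      ext p
      simp only [Set.mem_preimage, Set.mem_Iic, Set.mem_empty_iff_false, iff_false, not_le]
      calc t < 0 := ht
        _ ≤ p.1 ^ 2 + p.2 ^ 2 := by positivity
    rw [hempty]
    simp
  · rw [if_pos ht]
    set S : Set (ℝ × ℝ) := (fun p : ℝ × ℝ => p.1 ^ 2 + p.2 ^ 2) ⁻¹' Iic t with hSdef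
    have hS : MeasurableSet S := hq measurableSet_Iic
    have hgw : gaussianReal 0 v = volume.withDensity (gaussianPDF 0 v) :=
      gaussianReal_of_var_ne_zero 0 hv
    rw [hgw, prod_withDensity (measurable_gaussianPDF 0 v) (measurable_gaussianPDF 0 v),
      withDensity_apply _ hS]
    set dd : ℝ × ℝ → ℝ := fun p => gaussianPDFReal 0 v p.1 * gaussianPDFReal 0 v p.2 with hdd
    have hpt : ∀ p : ℝ × ℝ, gaussianPDF 0 v p.1 * gaussianPDF 0 v p.2
        = ENNReal.ofReal (dd p) := by
      intro p
      rw [gaussianPDF_def, ← ENNReal.ofReal_mul (gaussianPDFReal_nonneg 0 v p.1)]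
    simp_rw [hpt]
    have hInt : Integrable dd (volume.prod volume) :=
      Integrable.mul_prod (integrable_gaussianPDFReal 0 v) (integrable_gaussianPDFReal 0 v)
    rw [← ofReal_integral_eq_lintegral_ofReal hInt.integrableOn
      (Filter.Eventually.of_forall fun p =>
        mul_nonneg (gaussianPDFReal_nonneg 0 v p.1) (gaussianPDFReal_nonneg 0 v p.2))]
    congr 1
    rw [← MeasureTheory.integral_indicator hS, ← Measure.volume_eq_prod,
      ← integral_comp_polarCoord_symm (S.indicator dd)]
    set c : ℝ := (π * Ω)⁻¹ with hc
    have hA2 : (Real.sqrt (2*π*(v:ℝ)))⁻¹ * (Real.sqrt (2*π*(v:ℝ)))⁻¹ = c := by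
      rw [← mul_inv, Real.mul_self_sqrt (by positivity), hc]
      congr 1
      rw [← h2v]; ring
    have key : EqOn (fun p : ℝ × ℝ => p.1 • S.indicator dd (polarCoord.symm p))
        (fun p : ℝ × ℝ => ((Iic (Real.sqrt t)).indicator
          (fun u => u * (c * Real.exp (-(u^2/Ω)))) p.1) * (fun _ : ℝ => (1:ℝ)) p.2)
        polarCoord.target := by
      rintro ⟨r, θ⟩ hp
      rw [polarCoord_target] at hp
      have hr : 0 < r := hp.1
      have hsq : (r * cos θ) ^ 2 + (r * sin θ) ^ 2 = r ^ 2 := by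
        have h := sin_sq_add_cos_sq θ
        calc (r * cos θ) ^ 2 + (r * sin θ) ^ 2 = r^2 * (sin θ^2 + cos θ^2) := by ring
          _ = r ^ 2 := by rw [h, mul_one]
      have hsymm : polarCoord.symm (r, θ) = (r * cos θ, r * sin θ) := polarCoord_symm_apply _
      have hmem : ((r * cos θ, r * sin θ) : ℝ × ℝ) ∈ S ↔ r ^ 2 ≤ t := by
        simp only [hSdef, Set.mem_preimage, Set.mem_Iic]
        rw [hsq]
      have hE : Real.exp (-(r*cos θ)^2/Ω) * Real.exp (-(r*sin θ)^2/Ω)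
          = Real.exp (-(r^2/Ω)) := by
        rw [← Real.exp_add]
        congr 1
        rw [← add_div, ← neg_add, hsq, neg_div]
      have hddval : dd (r * cos θ, r * sin θ) = c * Real.exp (-(r^2/Ω)) := by
        simp only [hdd, gaussianPDFReal, sub_zero, h2v]
        calc (Real.sqrt (2*π*(v:ℝ)))⁻¹ * Real.exp (-(r*cos θ)^2/Ω)
              * ((Real.sqrt (2*π*(v:ℝ)))⁻¹ * Real.exp (-(r*sin θ)^2/Ω))
            = ((Real.sqrt (2*π*(v:ℝ)))⁻¹ * (Real.sqrt (2*π*(v:ℝ)))⁻¹)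
              * (Real.exp (-(r*cos θ)^2/Ω) * Real.exp (-(r*sin θ)^2/Ω)) := by ring
          _ = c * Real.exp (-(r^2/Ω)) := by rw [hA2, hE]
      simp only
      rw [hsymm]
      by_cases hrt : r ^ 2 ≤ t
      · rw [Set.indicator_of_mem (hmem.mpr hrt),
          Set.indicator_of_mem (by
            simp only [Set.mem_Iic]
            exact (Real.le_sqrt hr.le ht).mpr hrt), hddval]
        rw [smul_eq_mul, mul_one]
      · rw [Set.indicator_of_notMem (fun h => hrt (hmem.mp h)),
          Set.indicator_of_notMem (by
            simp only [Set.mem_Iic, not_le]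
            by_contra hcon
            push_neg at hcon
            exact hrt ((Real.le_sqrt hr.le ht).mp hcon)), smul_zero, zero_mul]
    rw [polarCoord_target] at key ⊢
    rw [setIntegral_congr_fun (measurableSet_Ioi.prod measurableSet_Ioo) key,
      Measure.volume_eq_prod, ← Measure.prod_restrict,
      integral_prod_mul ((Iic (Real.sqrt t)).indicator (fun u => u * (c * Real.exp (-(u^2/Ω)))))
        (fun _ : ℝ => (1:ℝ))]
    have hθint : ∫ _ in Ioo (-π) π, (1:ℝ) = 2 * π := by
      rw [setIntegral_const, Real.volume_real_Ioo, smul_eq_mul, mul_one,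
        max_eq_left (by linarith [Real.pi_pos])]
      ring
    have hrint : ∫ r in Ioi (0:ℝ), (Iic (Real.sqrt t)).indicator
        (fun u => u * (c * Real.exp (-(u^2/Ω)))) r
        = (Ω/2) * c * (1 - Real.exp (-(t/Ω))) := by
      rw [setIntegral_indicator measurableSet_Iic, Set.Ioi_inter_Iic,
        ← intervalIntegral.integral_of_le (Real.sqrt_nonneg t)]
      have hderiv : ∀ u ∈ Set.uIcc (0:ℝ) (Real.sqrt t),
          HasDerivAt (fun u : ℝ => -(Ω/2) * (c * Real.exp (-(u^2/Ω))))
            (u * (c * Real.exp (-(u^2/Ω)))) u := by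
        intro u _
        have h1 : HasDerivAt (fun u : ℝ => -(u^2/Ω)) (-(2*u/Ω)) u := by
          have := ((hasDerivAt_pow 2 u).div_const Ω).fun_neg
          simpa using this
        have h2 := h1.exp
        have h3 := (h2.const_mul c).const_mul (-(Ω/2))
        refine h3.congr_deriv ?_
        field_simp
      rw [intervalIntegral.integral_eq_sub_of_hasDerivAt hderiv
        (((continuous_id.mul (continuous_const.mul
          ((((continuous_pow 2).div_const Ω).neg).rexp))).intervalIntegrable _ _))]
      rw [Real.sq_sqrt ht]
      norm_num
      ring
    rw [hθint, hrint, hc]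
    rw [show -(Ω⁻¹ * t) = -(t/Ω) by rw [inv_mul_eq_div]]
    field_simp

lemma upper_integrable {s x : ℝ} (hs : 0 < s) (hx : 0 ≤ x) :
    IntegrableOn (fun t => t ^ (s - 1) * Real.exp (-t)) (Ioi x) := by
  refine ((Real.GammaIntegral_convergent hs).mono_set
    (Ioi_subset_Ioi hx)).congr_fun (fun t _ => mul_comm _ _) measurableSet_Ioi

lemma psi_nonneg_on {s a : ℝ} (ha : 0 ≤ a) :
    ∀ t ∈ Ioi a, 0 ≤ t ^ (s - 1) * Real.exp (-t) := fun t ht =>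
  mul_nonneg (Real.rpow_nonneg (le_of_lt (lt_of_le_of_lt ha ht)) _) (Real.exp_pos _).le

lemma psi_pos {s t : ℝ} (ht : 0 < t) : 0 < t ^ (s - 1) * Real.exp (-t) :=
  mul_pos (Real.rpow_pos_of_pos ht _) (Real.exp_pos _)

lemma integral_Ioc_psi_pos {s a b : ℝ} (h0 : 0 ≤ a) (hab : a < b)
    (hI : IntegrableOn (fun t => t ^ (s - 1) * Real.exp (-t)) (Ioc a b)) :
    0 < ∫ t in Ioc a b, t ^ (s - 1) * Real.exp (-t) := by
  rw [setIntegral_pos_iff_support_of_nonneg_ae _ hI]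
  · have hsub : Ioc a b ⊆ Function.support (fun t => t ^ (s - 1) * Real.exp (-t)) := by
      intro t ht
      exact (psi_pos (lt_of_le_of_lt h0 ht.1)).ne'
    rw [Set.inter_eq_self_of_subset_right hsub, Real.volume_Ioc]
    exact ENNReal.ofReal_pos.mpr (sub_pos.2 hab)
  · exact (ae_restrict_iff' measurableSet_Ioc).2 (Filter.Eventually.of_forall fun t ht =>
      psi_nonneg_on h0 t (Set.mem_Ioc.mp ht).1)

lemma upper_lt {s a b : ℝ} (hs : 0 < s) (h0 : 0 < a) (hab : a < b) :
    upperIncGamma s b < upperIncGamma s a := by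
  have hIa := upper_integrable (x := a) hs h0.le
  have hIb := upper_integrable (x := b) hs (h0.le.trans hab.le)
  have hsplit : Ioc a b ∪ Ioi b = Ioi a := Ioc_union_Ioi_eq_Ioi hab.le
  have hIoc : IntegrableOn (fun t => t ^ (s - 1) * Real.exp (-t)) (Ioc a b) :=
    hIa.mono_set Ioc_subset_Ioi_self
  have : upperIncGamma s a = (∫ t in Ioc a b, t ^ (s - 1) * Real.exp (-t))
      + upperIncGamma s b := by
    rw [upperIncGamma, upperIncGamma, ← hsplit,
      setIntegral_union (Ioc_disjoint_Ioi le_rfl) measurableSet_Ioi hIoc hIb]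
  rw [this]
  have hpos := integral_Ioc_psi_pos (s := s) h0.le hab hIoc
  linarith

lemma lower_lt {s a b : ℝ} (hs : 0 < s) (h0 : 0 < a) (hab : a < b) :
    lowerIncGamma s a < lowerIncGamma s b := by
  have hIb : IntegrableOn (fun t => t ^ (s - 1) * Real.exp (-t)) (Ioc 0 b) :=
    (upper_integrable hs le_rfl).mono_set Ioc_subset_Ioi_self
  have hsplit : Ioc 0 a ∪ Ioc a b = Ioc 0 b := Ioc_union_Ioc_eq_Ioc h0.le hab.le
  have hI1 := hIb.mono_set (show Ioc 0 a ⊆ Ioc 0 b from Ioc_subset_Ioc_right hab.le)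
  have hI2 := hIb.mono_set (show Ioc a b ⊆ Ioc 0 b from Ioc_subset_Ioc_left h0.le)
  have : lowerIncGamma s b = lowerIncGamma s a
      + ∫ t in Ioc a b, t ^ (s - 1) * Real.exp (-t) := by
    rw [lowerIncGamma, lowerIncGamma, ← hsplit,
      setIntegral_union (Set.Ioc_disjoint_Ioc_of_le le_rfl) measurableSet_Ioc hI1 hI2]
  rw [this]
  have hpos := integral_Ioc_psi_pos (s := s) h0.le hab hI2
  linarith

lemma gamma_tail (n : ℕ) (hn : 1 ≤ n) {l ν : ℝ} (hl : 0 < l) (hν : 0 < ν) :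
    gammaMeasure (n : ℝ) l (Ioi ν) =
      ENNReal.ofReal (upperIncGamma (n : ℝ) (l * ν) / Real.Gamma (n : ℝ)) := by
  have hnR : (0:ℝ) < n := by exact_mod_cast hn
  have hΓ := Real.Gamma_pos_of_pos hnR
  have hlν : 0 < l * ν := mul_pos hl hν
  set ψ : ℝ → ℝ := fun t => t ^ ((n:ℝ) - 1) * Real.exp (-t) with hψdef
  set C : ℝ := l ^ (n:ℝ) / Real.Gamma (n:ℝ) * (l ^ ((n:ℝ)-1))⁻¹ with hC
  show (volume.withDensity (gammaPDF (n:ℝ) l)) (Ioi ν) = _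
  rw [withDensity_apply _ measurableSet_Ioi]
  have heq : ∀ᵐ x ∂volume, x ∈ Ioi ν → gammaPDF (n:ℝ) l x
      = ENNReal.ofReal (C * ψ (l * x)) := by
    refine Filter.Eventually.of_forall fun x hx => ?_
    have hx0 : 0 < x := hν.trans hx
    rw [gammaPDF_of_nonneg hx0.le]
    congr 1
    rw [hψdef, hC]
    simp only
    rw [Real.mul_rpow hl.le hx0.le]
    have h1 : (0:ℝ) < l ^ ((n:ℝ)-1) := Real.rpow_pos_of_pos hl _
    field_simp
  rw [setLIntegral_congr_fun_ae measurableSet_Ioi heq]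
  have hInt : IntegrableOn (fun x => C * ψ (l * x)) (Ioi ν) := by
    refine Integrable.const_mul ?_ C
    exact (integrableOn_Ioi_comp_mul_left_iff ψ ν hl).mpr
      (upper_integrable hnR hlν.le)
  rw [← ofReal_integral_eq_lintegral_ofReal hInt]
  · congr 1
    rw [MeasureTheory.integral_const_mul, integral_comp_mul_left_Ioi ψ ν hl]
    rw [upperIncGamma]
    have h1 : (0:ℝ) < l ^ ((n:ℝ)-1) := Real.rpow_pos_of_pos hl _
    have h2 : l ^ (n:ℝ) = l ^ ((n:ℝ)-1) * l := by
      rw [← Real.rpow_add_one hl.ne']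
      norm_num
    rw [smul_eq_mul, hC, h2]
    field_simp
    ring
  · refine (ae_restrict_iff' measurableSet_Ioi).2 (Filter.Eventually.of_forall fun x hx => ?_)
    have hx0 : 0 < x := hν.trans hx
    have : 0 ≤ ψ (l * x) := by
      have := psi_pos (s := (n:ℝ)) (mul_pos hl hx0)
      exact this.le
    have hC0 : 0 ≤ C := by
      have h1 : (0:ℝ) < l ^ ((n:ℝ)-1) := Real.rpow_pos_of_pos hl _
      have h2 : (0:ℝ) < l ^ (n:ℝ) := Real.rpow_pos_of_pos hl _
      rw [hC]; positivity
    exact mul_nonneg hC0 this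

lemma gamma_cdf (n : ℕ) (hn : 1 ≤ n) {l ν : ℝ} (hl : 0 < l) (hν : 0 < ν) :
    gammaMeasure (n : ℝ) l (Iic ν) =
      ENNReal.ofReal (lowerIncGamma (n : ℝ) (l * ν) / Real.Gamma (n : ℝ)) := by
  have hnR : (0:ℝ) < n := by exact_mod_cast hn
  have hΓ := Real.Gamma_pos_of_pos hnR
  have hlν : 0 < l * ν := mul_pos hl hν
  set ψ : ℝ → ℝ := fun t => t ^ ((n:ℝ) - 1) * Real.exp (-t) with hψdef
  set C : ℝ := l ^ (n:ℝ) / Real.Gamma (n:ℝ) * (l ^ ((n:ℝ)-1))⁻¹ with hC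
  show (volume.withDensity (gammaPDF (n:ℝ) l)) (Iic ν) = _
  rw [withDensity_apply _ measurableSet_Iic, ← Set.Iic_union_Ioc_eq_Iic hν.le,
    lintegral_union measurableSet_Ioc (Iic_disjoint_Ioc le_rfl)]
  have hzero : ∫⁻ x in Iic (0:ℝ), gammaPDF (n:ℝ) l x = 0 := by
    have h0 : ∀ᵐ x ∂volume, x ∈ Iic (0:ℝ) → gammaPDF (n:ℝ) l x = 0 := by
      filter_upwards [measure_eq_zero_iff_ae_notMem.mp (measure_singleton (0:ℝ))] with x hx hmem
      rcases lt_or_eq_of_le (Set.mem_Iic.mp hmem) with h | h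
      · exact gammaPDF_of_neg h
      · exact absurd h hx
    rw [setLIntegral_congr_fun_ae measurableSet_Iic h0]
    simp
  rw [hzero, zero_add]
  have heq : ∀ᵐ x ∂volume, x ∈ Ioc 0 ν → gammaPDF (n:ℝ) l x
      = ENNReal.ofReal (C * ψ (l * x)) := by
    refine Filter.Eventually.of_forall fun x hx => ?_
    have hx0 : 0 < x := hx.1
    rw [gammaPDF_of_nonneg hx0.le]
    congr 1
    rw [hψdef, hC]
    simp only
    rw [Real.mul_rpow hl.le hx0.le]
    have h1 : (0:ℝ) < l ^ ((n:ℝ)-1) := Real.rpow_pos_of_pos hl _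
    field_simp
  rw [setLIntegral_congr_fun_ae measurableSet_Ioc heq]
  have hInt : IntegrableOn (fun x => C * ψ (l * x)) (Ioc 0 ν) := by
    refine Integrable.const_mul ?_ C
    exact ((integrableOn_Ioi_comp_mul_left_iff ψ 0 hl).mpr
      (by rw [mul_zero]; exact upper_integrable hnR le_rfl)).mono_set Ioc_subset_Ioi_self
  rw [← ofReal_integral_eq_lintegral_ofReal hInt]
  · congr 1
    rw [MeasureTheory.integral_const_mul, ← intervalIntegral.integral_of_le hν.le,
      intervalIntegral.integral_comp_mul_left ψ hl.ne', mul_zero,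
      intervalIntegral.integral_of_le hlν.le]
    rw [lowerIncGamma]
    have h1 : (0:ℝ) < l ^ ((n:ℝ)-1) := Real.rpow_pos_of_pos hl _
    have h2 : l ^ (n:ℝ) = l ^ ((n:ℝ)-1) * l := by
      rw [← Real.rpow_add_one hl.ne']
      norm_num
    rw [smul_eq_mul, hC, h2]
    field_simp
    ring
  · refine (ae_restrict_iff' measurableSet_Ioc).2 (Filter.Eventually.of_forall fun x hx => ?_)
    have hx0 : 0 < x := hx.1
    have hψ0 : 0 ≤ ψ (l * x) := (psi_pos (s := (n:ℝ)) (mul_pos hl hx0)).le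
    have hC0 : 0 ≤ C := by
      have h1 : (0:ℝ) < l ^ ((n:ℝ)-1) := Real.rpow_pos_of_pos hl _
      have h2 : (0:ℝ) < l ^ (n:ℝ) := Real.rpow_pos_of_pos hl _
      rw [hC]; positivity
    exact mul_nonneg hC0 hψ0

/-- Theorem 1: for the ML energy-detection threshold
`ν = N·(Ω₀Ω₁/(Ω₀-Ω₁))·ln(Ω₀/Ω₁)`, `0 < Ω₀ < Ω₁`, the cross-over probabilities of
an `N`-antenna non-coherent detector are
`P₀₁ = Γ(N, ν/Ω₀)/Γ(N)` and `P₁₀ = γ(N, ν/Ω₁)/Γ(N)`; moreover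
`ν/Ω₀ > N > ν/Ω₁ > 0` so both are less than `Γ(N,N)/Γ(N)` and `γ(N,N)/Γ(N)`
respectively, and with `θ = (Ω₁-Ω₀)/Ω₀` we have `ν/Ω₀ = N ln(1+θ)(1+θ)/θ` and
`ν/Ω₁ = N ln(1+θ)/θ`. -/
theorem ml_detector_crossover_probs (N : ℕ) (hN : 1 ≤ N) (Ω₀ Ω₁ : ℝ)
    (h0 : 0 < Ω₀) (h01 : Ω₀ < Ω₁)
    (ν θ : ℝ)
    (hν : ν = (N : ℝ) * (Ω₀ * Ω₁ / (Ω₀ - Ω₁)) * Real.log (Ω₀ / Ω₁))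
    (hθ : θ = (Ω₁ - Ω₀) / Ω₀) :
    (Measure.pi (fun _ : Fin N => complexGaussian Ω₀))
        {r : Fin N → ℂ | ν < ∑ k, Complex.normSq (r k)} =
      ENNReal.ofReal (upperIncGamma (N : ℝ) (ν / Ω₀) / Real.Gamma (N : ℝ)) ∧
    (Measure.pi (fun _ : Fin N => complexGaussian Ω₁))
        {r : Fin N → ℂ | ∑ k, Complex.normSq (r k) ≤ ν} =
      ENNReal.ofReal (lowerIncGamma (N : ℝ) (ν / Ω₁) / Real.Gamma (N : ℝ)) ∧
    ((N : ℝ) < ν / Ω₀ ∧ ν / Ω₁ < (N : ℝ) ∧ 0 < ν / Ω₁) ∧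
    (upperIncGamma (N : ℝ) (ν / Ω₀) / Real.Gamma (N : ℝ) <
        upperIncGamma (N : ℝ) (N : ℝ) / Real.Gamma (N : ℝ) ∧
      lowerIncGamma (N : ℝ) (ν / Ω₁) / Real.Gamma (N : ℝ) <
        lowerIncGamma (N : ℝ) (N : ℝ) / Real.Gamma (N : ℝ)) ∧
    (ν / Ω₀ = (N : ℝ) * Real.log (1 + θ) * (1 + θ) / θ ∧
      ν / Ω₁ = (N : ℝ) * Real.log (1 + θ) / θ) := by
  have hnR : (0:ℝ) < N := by exact_mod_cast hN
  have h1' : (0:ℝ) < Ω₁ - Ω₀ := sub_pos.2 h01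
  have h1pos : 0 < Ω₁ := h0.trans h01
  set L : ℝ := Real.log (Ω₁ / Ω₀) with hLdef
  have hLpos : 0 < L := Real.log_pos ((one_lt_div h0).mpr h01)
  have hlogdiv : Real.log (Ω₀ / Ω₁) = -L := by
    rw [hLdef, ← Real.log_inv, inv_div]
  have hA : Ω₀ * L < Ω₁ - Ω₀ := by
    have h := Real.log_lt_sub_one_of_pos (div_pos h1pos h0)
      (ne_of_gt ((one_lt_div h0).mpr h01))
    rw [← hLdef] at h
    have hm := mul_lt_mul_of_pos_left h h0
    have he : Ω₀ * (Ω₁ / Ω₀ - 1) = Ω₁ - Ω₀ := by field_simp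
    linarith
  have hB : Ω₁ - Ω₀ < Ω₁ * L := by
    have h := Real.log_lt_sub_one_of_pos (div_pos h0 h1pos)
      (by
        intro hcon
        rw [div_eq_one_iff_eq h1pos.ne'] at hcon
        exact h01.ne hcon)
    rw [hlogdiv] at h
    have hm := mul_lt_mul_of_pos_left h h1pos
    have he : Ω₁ * (Ω₀ / Ω₁ - 1) = Ω₀ - Ω₁ := by field_simp
    linarith
  have hva : ν / Ω₀ = (N:ℝ) * Ω₁ * L / (Ω₁ - Ω₀) := by
    rw [hν, hlogdiv]
    have hsub : Ω₀ - Ω₁ ≠ 0 := sub_ne_zero.mpr h01.ne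
    field_simp
    ring
  have hvb : ν / Ω₁ = (N:ℝ) * Ω₀ * L / (Ω₁ - Ω₀) := by
    rw [hν, hlogdiv]
    have hsub : Ω₀ - Ω₁ ≠ 0 := sub_ne_zero.mpr h01.ne
    field_simp
    ring
  have hC1 : (N:ℝ) < ν / Ω₀ := by
    rw [hva, lt_div_iff₀ h1']
    nlinarith
  have hC2 : ν / Ω₁ < (N:ℝ) := by
    rw [hvb, div_lt_iff₀ h1']
    nlinarith
  have hC3 : 0 < ν / Ω₁ := by
    rw [hvb]
    positivity
  have hν0 : 0 < ν := by
    rcases div_pos_iff.mp hC3 with ⟨h, _⟩ | ⟨_, h⟩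
    · exact h
    · linarith
  have hmns : Measurable Complex.normSq := Complex.continuous_normSq.measurable
  have hpm : Measurable (fun r : Fin N → ℂ => ∑ k, Complex.normSq (r k)) :=
    Finset.measurable_sum _ fun i _ => hmns.comp (measurable_pi_apply i)
  have hmap : ∀ {Ω : ℝ}, 0 < Ω →
      Measure.map (fun r : Fin N → ℂ => ∑ k, Complex.normSq (r k))
        (Measure.pi fun _ : Fin N => complexGaussian Ω) = gammaMeasure (N:ℝ) Ω⁻¹ := by
    intro Ω hΩ
    have hΩinv : 0 < Ω⁻¹ := inv_pos.mpr hΩ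
    haveI : IsProbabilityMeasure (gammaMeasure 1 Ω⁻¹) := isProbabilityMeasure_gammaMeasure one_pos hΩinv
    have hcw := (measurePreserving_pi (fun _ : Fin N => complexGaussian Ω)
      (fun _ : Fin N => gammaMeasure 1 Ω⁻¹)
      (fun _ => ⟨hmns, map_normSq hΩ⟩)).map_eq
    have hsum : Measurable (fun y : Fin N → ℝ => ∑ i, y i) :=
      Finset.measurable_sum _ fun i _ => measurable_pi_apply i
    have hdecomp : (fun r : Fin N → ℂ => ∑ k, Complex.normSq (r k))
        = (fun y : Fin N → ℝ => ∑ i, y i) ∘ (fun (r : Fin N → ℂ) (i : Fin N)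
            => Complex.normSq (r i)) := rfl
    rw [hdecomp, ← Measure.map_map hsum
      (show Measurable fun (r : Fin N → ℂ) (i : Fin N) => Complex.normSq (r i) from
        measurable_pi_iff.mpr fun i => hmns.comp (measurable_pi_apply i)), hcw,
      map_sum_pi N hN hΩinv]
  have hinv0 : 0 < Ω₀⁻¹ := inv_pos.mpr h0
  have hinv1 : 0 < Ω₁⁻¹ := inv_pos.mpr h1pos
  refine ⟨?_, ?_, ⟨hC1, hC2, hC3⟩, ⟨?_, ?_⟩, ?_⟩
  · have : {r : Fin N → ℂ | ν < ∑ k, Complex.normSq (r k)}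
        = (fun r : Fin N → ℂ => ∑ k, Complex.normSq (r k)) ⁻¹' (Ioi ν) := rfl
    rw [this, ← Measure.map_apply hpm measurableSet_Ioi, hmap h0,
      gamma_tail N hN hinv0 hν0, inv_mul_eq_div]
  · have : {r : Fin N → ℂ | ∑ k, Complex.normSq (r k) ≤ ν}
        = (fun r : Fin N → ℂ => ∑ k, Complex.normSq (r k)) ⁻¹' (Iic ν) := rfl
    rw [this, ← Measure.map_apply hpm measurableSet_Iic, hmap h1pos,
      gamma_cdf N hN hinv1 hν0, inv_mul_eq_div]
  · have hΓ := Real.Gamma_pos_of_pos hnR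
    exact (div_lt_div_iff_of_pos_right hΓ).mpr (upper_lt hnR hnR hC1)
  · have hΓ := Real.Gamma_pos_of_pos hnR
    exact (div_lt_div_iff_of_pos_right hΓ).mpr (lower_lt hnR hC3 hC2)
  · have h1θ : 1 + θ = Ω₁ / Ω₀ := by rw [hθ]; field_simp; ring
    have hθpos : 0 < θ := by rw [hθ]; positivity
    constructor
    · rw [hva, h1θ, ← hLdef, hθ]
      field_simp
    · rw [hvb, h1θ, ← hLdef, hθ]
      field_simp
end
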